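/- There exists a constant C>0 such that for all x₀, y, ξ ∈ ℝ₊ with x₀ ≠ y and |x₀ − ξ| < |x₀ − y|/2, one has ∫₀^{π/2} (sinθ)^{2λ−1} / (ξ² + y² − 2ξy·cosθ)^{λ+1} dθ ≤ C / ( |x₀−y| · m_λ(I(x₀,|x₀−y|)) ). -/
import Mathlib
set_option maxHeartbeats 1000000


open MeasureTheory Real Set Filter

/-- The measure `dm_λ(x) = x^{2λ} dx` on `ℝ₊ = (0,∞)`. -/
noncomputable def mlam (lam : ℝ) : Measure ℝ :=
  (volume.restrict (Set.Ioi (0:ℝ))).withDensity (fun x => ENNReal.ofReal (x ^ (2*lam)))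

/-- The interval `I(x,r) = (x-r, x+r) ∩ ℝ₊`. -/
def Ilam (x r : ℝ) : Set ℝ := Set.Ioo (x - r) (x + r) ∩ Set.Ioi 0

namespace RegAux

lemma Ilam_measurable (x r : ℝ) : MeasurableSet (Ilam x r) :=
  measurableSet_Ioo.inter measurableSet_Ioi

/-- Upper bound for the measure of `Ilam`. -/
lemma mlam_le (lam x₀ r : ℝ) (hlam : 0 < lam) (hr : 0 < r) (hx₀ : 0 < x₀) :
    mlam lam (Ilam x₀ r) ≤ ENNReal.ofReal (2*r*(x₀+r)^(2*lam)) := by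
  rw [mlam, withDensity_apply _ (Ilam_measurable x₀ r)]
  have h1 : (∫⁻ x in Ilam x₀ r, ENNReal.ofReal (x ^ (2*lam)) ∂(volume.restrict (Set.Ioi (0:ℝ))))
      ≤ ∫⁻ _ in Ilam x₀ r, ENNReal.ofReal ((x₀+r) ^ (2*lam)) ∂(volume.restrict (Set.Ioi (0:ℝ))) := by
    apply setLIntegral_mono' (Ilam_measurable x₀ r)
    intro x hx
    obtain ⟨⟨_, hx2⟩, hx3⟩ := hx
    exact ENNReal.ofReal_le_ofReal (Real.rpow_le_rpow (le_of_lt hx3) hx2.le (by positivity))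
  refine h1.trans ?_
  rw [setLIntegral_const]
  have h2 : (volume.restrict (Set.Ioi (0:ℝ))) (Ilam x₀ r) ≤ ENNReal.ofReal (2*r) := by
    rw [Measure.restrict_apply (Ilam_measurable x₀ r)]
    have hsub : Ilam x₀ r ∩ Set.Ioi 0 ⊆ Set.Ioo (x₀ - r) (x₀ + r) := fun x hx => hx.1.1
    refine (measure_mono hsub).trans ?_
    rw [Real.volume_Ioo]
    exact ENNReal.ofReal_le_ofReal (le_of_eq (by ring))
  calc ENNReal.ofReal ((x₀+r) ^ (2*lam)) * (volume.restrict (Set.Ioi (0:ℝ))) (Ilam x₀ r)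
      ≤ ENNReal.ofReal ((x₀+r) ^ (2*lam)) * ENNReal.ofReal (2*r) := by
        exact mul_le_mul_right h2 _
    _ = ENNReal.ofReal (2*r*(x₀+r)^(2*lam)) := by
        rw [← ENNReal.ofReal_mul (by positivity)]
        ring_nf

/-- The measure of `Ilam` is positive. -/
lemma mlam_pos (lam x₀ r : ℝ) (hlam : 0 < lam) (hr : 0 < r) (hx₀ : 0 < x₀) :
    0 < mlam lam (Ilam x₀ r) := by
  set c0 : ℝ := max (x₀ - r) (x₀/2) with hc0
  have hc0pos : 0 < c0 := lt_of_lt_of_le (by linarith) (le_max_right _ _)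
  have hc0lt : c0 < x₀ := max_lt (by linarith) (by linarith)
  have hJsub : Set.Ioo c0 x₀ ⊆ Ilam x₀ r := by
    intro x hx
    refine ⟨⟨?_, ?_⟩, ?_⟩
    · exact lt_of_le_of_lt (by simp [hc0]) hx.1
    · linarith [hx.2]
    · exact lt_trans hc0pos hx.1
  have h2 : ENNReal.ofReal (c0^(2*lam)) * ENNReal.ofReal (x₀ - c0) ≤ mlam lam (Ilam x₀ r) := by
    rw [mlam, withDensity_apply _ (Ilam_measurable x₀ r)]
    have h3 : (∫⁻ _ in Set.Ioo c0 x₀, ENNReal.ofReal (c0^(2*lam)) ∂(volume.restrict (Set.Ioi (0:ℝ))))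
        ≤ ∫⁻ x in Ilam x₀ r, ENNReal.ofReal (x ^ (2*lam)) ∂(volume.restrict (Set.Ioi (0:ℝ))) := by
      refine le_trans ?_ (lintegral_mono_set hJsub)
      apply setLIntegral_mono' measurableSet_Ioo
      intro x hx
      exact ENNReal.ofReal_le_ofReal (Real.rpow_le_rpow hc0pos.le hx.1.le (by positivity))
    refine le_trans ?_ h3
    rw [setLIntegral_const]
    have h4 : (volume.restrict (Set.Ioi (0:ℝ))) (Set.Ioo c0 x₀) = ENNReal.ofReal (x₀ - c0) := by
      rw [Measure.restrict_apply measurableSet_Ioo]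
      have : Set.Ioo c0 x₀ ∩ Set.Ioi 0 = Set.Ioo c0 x₀ := by
        apply Set.inter_eq_self_of_subset_left
        intro x hx; exact lt_trans hc0pos hx.1
      rw [this, Real.volume_Ioo]
    rw [h4]
  refine lt_of_lt_of_le ?_ h2
  apply ENNReal.mul_pos
  · exact (ENNReal.ofReal_pos.mpr (Real.rpow_pos_of_pos hc0pos _)).ne'
  · exact (ENNReal.ofReal_pos.mpr (by linarith)).ne'

/-- The core analytic estimate. -/
lemma core (lam : ℝ) (hlam : 0 < lam) :
    ∃ C₁ : ℝ, 0 < C₁ ∧ ∀ A B : ℝ, 0 < A → 0 < B →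
    (∫ θ in (0:ℝ)..(π/2), Real.sin θ ^ (2*lam-1) / (A + B*(1 - Real.cos θ))^(lam+1))
      ≤ C₁ / (A * (max A B) ^ lam) := by
  have hpi : (0:ℝ) < π := Real.pi_pos
  set p : ℝ := 2*lam - 1 with hp_def
  have hp : -1 < p := by rw [hp_def]; linarith
  set K : ℝ := max 1 ((2/π)^p) with hK_def
  have hK1 : (1:ℝ) ≤ K := le_max_left _ _
  have hKpos : (0:ℝ) < K := lt_of_lt_of_le one_pos hK1
  set c : ℝ := 2/π^2 with hc_def
  have hcpos : 0 < c := by rw [hc_def]; positivity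
  have hPpos : (0:ℝ) < (π/2)^(2*lam) := Real.rpow_pos_of_pos (by linarith) _
  have htpos : (0:ℝ) < (2:ℝ)^lam := Real.rpow_pos_of_pos (by norm_num) _
  have hcl : (0:ℝ) < c^(-lam) := Real.rpow_pos_of_pos hcpos _
  set C₁ : ℝ := K * ((π/2)^(2*lam) * 2^lam / (2*lam) + c^(-lam) * (1/(2*lam) + 1/2)) with hC₁
  have hC₁pos : 0 < C₁ := by
    apply mul_pos hKpos
    have h1 : 0 < (π/2)^(2*lam) * 2^lam / (2*lam) := by
      apply div_pos (mul_pos hPpos htpos) (by linarith)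
    have h2 : 0 < c^(-lam) * (1/(2*lam) + 1/2) := by
      apply mul_pos hcl
      have : 0 < 1/(2*lam) := by positivity
      linarith
    linarith
  refine ⟨C₁, hC₁pos, ?_⟩
  intro A B hA hB
  set g : ℝ → ℝ := fun θ => θ^p / (A + c*B*θ^2)^(lam+1) with hg_def
  -- pointwise bound
  have hpt : ∀ θ ∈ Set.Icc (0:ℝ) (π/2),
      Real.sin θ ^ p / (A + B*(1 - Real.cos θ))^(lam+1) ≤ K * g θ := by
    intro θ hθ
    obtain ⟨h0, h1⟩ := hθ
    have hd2 : 0 < A + c*B*θ^2 := by positivity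
    have hdle : A + c*B*θ^2 ≤ A + B*(1 - Real.cos θ) := by
      have habs : |θ| ≤ π := by rw [abs_of_nonneg h0]; linarith
      have hcos := Real.cos_le_one_sub_mul_cos_sq habs
      have hcθ : c*θ^2 ≤ 1 - Real.cos θ := by rw [hc_def]; linarith
      nlinarith [mul_le_mul_of_nonneg_left hcθ hB.le]
    have hden : (A + c*B*θ^2)^(lam+1) ≤ (A + B*(1 - Real.cos θ))^(lam+1) :=
      Real.rpow_le_rpow hd2.le hdle (by linarith)
    have hdenpos : 0 < (A + c*B*θ^2)^(lam+1) := Real.rpow_pos_of_pos hd2 _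
    have hnum : Real.sin θ ^ p ≤ K * θ^p := by
      rcases eq_or_lt_of_le h0 with h | h
      · rw [← h, Real.sin_zero]
        exact le_mul_of_one_le_left (Real.rpow_nonneg le_rfl _) hK1
      · rcases le_or_gt 0 p with hp0 | hp0
        · have h2 : Real.sin θ ^ p ≤ θ ^ p :=
            Real.rpow_le_rpow (Real.sin_nonneg_of_nonneg_of_le_pi h0 (by linarith))
              (Real.sin_le h0) hp0
          exact h2.trans (le_mul_of_one_le_left (Real.rpow_nonneg h0 _) hK1)
        · have hsin : 2/π * θ ≤ Real.sin θ := Real.mul_le_sin h0 h1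
          have hq : 0 < 2/π*θ := by positivity
          have h2 : Real.sin θ ^ p ≤ (2/π*θ)^p :=
            Real.rpow_le_rpow_of_nonpos hq hsin hp0.le
          have h3 : (2/π*θ)^p = (2/π)^p * θ^p := Real.mul_rpow (by positivity) h0
          refine h2.trans ?_
          rw [h3]
          exact mul_le_mul_of_nonneg_right (le_max_right _ _) (Real.rpow_nonneg h0 _)
    calc Real.sin θ ^ p / (A + B*(1 - Real.cos θ))^(lam+1)
        ≤ (K * θ^p) / (A + c*B*θ^2)^(lam+1) :=
          div_le_div₀ (mul_nonneg hKpos.le (Real.rpow_nonneg h0 _)) hnum hdenpos hden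
      _ = K * g θ := by rw [hg_def]; ring
  -- pointwise bound for g by the simple power
  have hgpt : ∀ θ : ℝ, 0 ≤ θ → g θ ≤ (A^(lam+1))⁻¹ * θ^p := by
    intro θ h0
    have h1 : A^(lam+1) ≤ (A + c*B*θ^2)^(lam+1) :=
      Real.rpow_le_rpow hA.le (by nlinarith [mul_nonneg (mul_nonneg hcpos.le hB.le) (sq_nonneg θ)]) (by linarith)
    rw [inv_mul_eq_div, hg_def]
    exact div_le_div₀ (Real.rpow_nonneg h0 _) le_rfl (Real.rpow_pos_of_pos hA _) h1
  have hgnonneg : ∀ θ : ℝ, 0 ≤ θ → 0 ≤ g θ := by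
    intro θ h0
    rw [hg_def]
    positivity
  -- integrability of g on [0, π/2]
  have hg_cont : ContinuousOn g (Set.Ioc (0:ℝ) (π/2)) := by
    apply ContinuousOn.div
    · exact continuousOn_id.rpow_const (fun x hx => Or.inl (ne_of_gt hx.1))
    · exact ((continuous_const.add (continuous_const.mul (continuous_pow 2))).continuousOn).rpow_const
        (fun x _ => Or.inr (by linarith))
    · intro x _
      exact ne_of_gt (Real.rpow_pos_of_pos (by positivity) _)
  have hg_int : IntervalIntegrable g volume 0 (π/2) := by
    have hbound : IntervalIntegrable (fun θ : ℝ => (A^(lam+1))⁻¹ * θ^p) volume 0 (π/2) :=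
      (intervalIntegral.intervalIntegrable_rpow' hp).const_mul _
    refine hbound.mono_fun' ?_ ?_
    · rw [Set.uIoc_of_le (by positivity : (0:ℝ) ≤ π/2)]
      exact hg_cont.aestronglyMeasurable measurableSet_Ioc
    · rw [Set.uIoc_of_le (by positivity : (0:ℝ) ≤ π/2)]
      refine (ae_restrict_iff' measurableSet_Ioc).mpr (Filter.Eventually.of_forall fun θ hθ => ?_)
      have h0 : (0:ℝ) < θ := hθ.1
      show ‖g θ‖ ≤ (A^(lam+1))⁻¹ * θ^p
      rw [Real.norm_eq_abs, abs_of_nonneg (hgnonneg θ h0.le)]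
      exact hgpt θ h0.le
  -- integrability of the original integrand
  have hf_int : IntervalIntegrable
      (fun θ => Real.sin θ ^ p / (A + B*(1 - Real.cos θ))^(lam+1)) volume 0 (π/2) := by
    have hKg : IntervalIntegrable (fun θ => K * g θ) volume 0 (π/2) := hg_int.const_mul K
    refine hKg.mono_fun' ?_ ?_
    · rw [Set.uIoc_of_le (by positivity : (0:ℝ) ≤ π/2)]
      apply ContinuousOn.aestronglyMeasurable ?_ measurableSet_Ioc
      apply ContinuousOn.div
      · exact (Real.continuous_sin.continuousOn).rpow_const
          (fun x hx => Or.inl (ne_of_gt (Real.sin_pos_of_pos_of_lt_pi hx.1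
            (lt_of_le_of_lt hx.2 (by linarith)))))
      · exact ((continuous_const.add (continuous_const.mul
          (continuous_const.sub Real.continuous_cos))).continuousOn).rpow_const
          (fun x _ => Or.inr (by linarith))
      · intro x _
        have : 0 < A + B*(1 - Real.cos x) := by
          nlinarith [Real.cos_le_one x, hB]
        exact ne_of_gt (Real.rpow_pos_of_pos this _)
    · rw [Set.uIoc_of_le (by positivity : (0:ℝ) ≤ π/2)]
      refine (ae_restrict_iff' measurableSet_Ioc).mpr (Filter.Eventually.of_forall fun θ hθ => ?_)
      have hDpos : 0 < A + B*(1 - Real.cos θ) := by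
        nlinarith [Real.cos_le_one θ, hB]
      have hnn : 0 ≤ Real.sin θ ^ p / (A + B*(1 - Real.cos θ))^(lam+1) := by
        apply div_nonneg (Real.rpow_nonneg ?_ _) (Real.rpow_nonneg hDpos.le _)
        exact Real.sin_nonneg_of_nonneg_of_le_pi hθ.1.le (by linarith [hθ.2])
      show ‖Real.sin θ ^ p / (A + B*(1 - Real.cos θ))^(lam+1)‖ ≤ K * g θ
      rw [Real.norm_eq_abs, abs_of_nonneg hnn]
      exact hpt θ ⟨hθ.1.le, hθ.2⟩
  -- step 1 : ∫ f ≤ K * ∫ g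
  have step1 : (∫ θ in (0:ℝ)..(π/2), Real.sin θ ^ p / (A + B*(1 - Real.cos θ))^(lam+1))
      ≤ K * ∫ θ in (0:ℝ)..(π/2), g θ := by
    rw [← intervalIntegral.integral_const_mul]
    exact intervalIntegral.integral_mono_on (by positivity) hf_int (hg_int.const_mul K) hpt
  -- bound of ∫₀^b g for any 0 ≤ b ≤ π/2
  have hIg_le : ∀ b : ℝ, 0 ≤ b → b ≤ π/2 →
      (∫ θ in (0:ℝ)..b, g θ) ≤ (A^(lam+1))⁻¹ * (b^(2*lam)/(2*lam)) := by
    intro b hb0 hb1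
    have hint : IntervalIntegrable g volume 0 b := by
      apply hg_int.mono_set
      rw [Set.uIcc_of_le hb0, Set.uIcc_of_le (by positivity : (0:ℝ) ≤ π/2)]
      exact Set.Icc_subset_Icc le_rfl hb1
    have h2 : (∫ θ in (0:ℝ)..b, g θ) ≤ ∫ θ in (0:ℝ)..b, (A^(lam+1))⁻¹ * θ^p :=
      intervalIntegral.integral_mono_on hb0 hint
        ((intervalIntegral.intervalIntegrable_rpow' hp).const_mul _)
        (fun θ hθ => hgpt θ hθ.1)
    rw [intervalIntegral.integral_const_mul, integral_rpow (Or.inl hp)] at h2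
    have hp1 : p + 1 = 2*lam := by rw [hp_def]; ring
    rw [hp1, Real.zero_rpow (by linarith : 2*lam ≠ 0), sub_zero] at h2
    exact h2
  have hmaxpos : 0 < max A B := lt_of_lt_of_le hA (le_max_left _ _)
  have hMpos : 0 < (max A B)^lam := Real.rpow_pos_of_pos hmaxpos _
  have hAl : A^(lam+1) = A^lam * A := by rw [Real.rpow_add hA, Real.rpow_one]
  have hapos : 0 < A^lam := Real.rpow_pos_of_pos hA _
  rcases le_or_gt B (2*A) with hBA | hBA
  · -- Case I : B ≤ 2A
    have hIg := hIg_le (π/2) (by positivity) le_rfl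
    have h1 : (max A B)^lam ≤ 2^lam * A^lam := by
      rw [← Real.mul_rpow (by norm_num) hA.le]
      exact Real.rpow_le_rpow hmaxpos.le (max_le (by linarith) hBA) hlam.le
    have step2 : K * (∫ θ in (0:ℝ)..(π/2), g θ)
        ≤ K * ((A^(lam+1))⁻¹ * ((π/2)^(2*lam)/(2*lam))) :=
      mul_le_mul_of_nonneg_left hIg hKpos.le
    refine (step1.trans step2).trans ?_
    rw [le_div_iff₀ (mul_pos hA hMpos), hAl]
    have heq : K * ((A^lam * A)⁻¹ * ((π/2)^(2*lam)/(2*lam))) * (A * (max A B)^lam)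
        = K * (π/2)^(2*lam)/(2*lam) * ((max A B)^lam / A^lam) := by
      field_simp
    rw [heq]
    have h2 : (max A B)^lam / A^lam ≤ 2^lam := by
      rw [div_le_iff₀ hapos]
      exact h1
    have h3 : K * (π/2)^(2*lam)/(2*lam) * ((max A B)^lam / A^lam)
        ≤ K * (π/2)^(2*lam)/(2*lam) * 2^lam := by
      apply mul_le_mul_of_nonneg_left h2
      positivity
    refine h3.trans ?_
    rw [hC₁]
    have h4 : 0 < K * (c^(-lam) * (1/(2*lam) + 1/2)) := by
      apply mul_pos hKpos (mul_pos hcl (by positivity))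
    have h5 : K * (π/2)^(2*lam)/(2*lam) * 2^lam = K * ((π/2)^(2*lam) * 2^lam / (2*lam)) := by
      ring
    rw [h5, mul_add]
    linarith
  · -- Case II : 2A < B
    have hmaxB : max A B = B := max_eq_right (by linarith)
    set T : ℝ := Real.sqrt (A/(c*B)) with hT_def
    have hT0 : 0 < T := Real.sqrt_pos.mpr (by positivity)
    have hT2 : T^2 = A/(c*B) := Real.sq_sqrt (by positivity)
    have hTle : T ≤ π/2 := by
      have hABle : A/(c*B) ≤ (π/2)^2 := by
        rw [div_le_iff₀ (by positivity)]
        have heq : (π/2)^2 * (c*B) = B/2 := by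
          rw [hc_def]
          field_simp
        rw [heq]
        linarith
      nlinarith [hT2, hT0.le, hpi]
    -- split the integral
    have hint1 : IntervalIntegrable g volume 0 T := by
      apply hg_int.mono_set
      rw [Set.uIcc_of_le hT0.le, Set.uIcc_of_le (by positivity : (0:ℝ) ≤ π/2)]
      exact Set.Icc_subset_Icc le_rfl hTle
    have hint2 : IntervalIntegrable g volume T (π/2) := by
      apply hg_int.mono_set
      rw [Set.uIcc_of_le hTle, Set.uIcc_of_le (by positivity : (0:ℝ) ≤ π/2)]
      exact Set.Icc_subset_Icc hT0.le le_rfl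
    have hsplit : (∫ θ in (0:ℝ)..(π/2), g θ)
        = (∫ θ in (0:ℝ)..T, g θ) + ∫ θ in T..(π/2), g θ :=
      (intervalIntegral.integral_add_adjacent_intervals hint1 hint2).symm
    have bound1 := hIg_le T hT0.le hTle
    -- bound on [T, π/2]
    have h0notin : (0:ℝ) ∉ Set.uIcc T (π/2) := by
      rw [Set.uIcc_of_le hTle]
      exact fun h => hT0.not_ge h.1
    have hcBpos : 0 < (c*B)^(lam+1) := Real.rpow_pos_of_pos (by positivity) _
    have hptT : ∀ θ ∈ Set.Icc T (π/2), g θ ≤ ((c*B)^(lam+1))⁻¹ * θ^(-3:ℝ) := by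
      intro θ hθ
      have hθ0 : 0 < θ := lt_of_lt_of_le hT0 hθ.1
      have h3 : ((θ:ℝ)^2)^(lam+1) = θ^(2*lam+2) := by
        rw [← Real.rpow_two, ← Real.rpow_mul hθ0.le]
        congr 1
        ring
      have hden : (c*B)^(lam+1) * θ^(2*lam+2) ≤ (A + c*B*θ^2)^(lam+1) := by
        have h1 : c*B*θ^2 ≤ A + c*B*θ^2 := by linarith
        have h2 : (c*B*θ^2)^(lam+1) = (c*B)^(lam+1) * (θ^2)^(lam+1) :=
          Real.mul_rpow (by positivity) (sq_nonneg θ)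
        rw [← h3, ← h2]
        exact Real.rpow_le_rpow (by positivity) h1 (by linarith)
      have h4 : θ^p / ((c*B)^(lam+1) * θ^(2*lam+2)) = ((c*B)^(lam+1))⁻¹ * θ^(-3:ℝ) := by
        rw [mul_comm ((c*B)^(lam+1)) (θ^(2*lam+2)), ← div_div, ← Real.rpow_sub hθ0]
        have : p - (2*lam+2) = (-3:ℝ) := by rw [hp_def]; ring
        rw [this, div_eq_inv_mul]
      calc g θ ≤ θ^p / ((c*B)^(lam+1) * θ^(2*lam+2)) := by
            rw [hg_def]
            exact div_le_div₀ (Real.rpow_nonneg hθ0.le _) le_rfl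
              (mul_pos hcBpos (Real.rpow_pos_of_pos hθ0 _)) hden
        _ = ((c*B)^(lam+1))⁻¹ * θ^(-3:ℝ) := h4
    have hint3 : IntervalIntegrable (fun θ:ℝ => ((c*B)^(lam+1))⁻¹ * θ^(-3:ℝ)) volume T (π/2) :=
      (intervalIntegral.intervalIntegrable_rpow (Or.inr h0notin)).const_mul _
    have bound2 : (∫ θ in T..(π/2), g θ) ≤ ((c*B)^(lam+1))⁻¹ * (T^(-2:ℝ)/2) := by
      have h5 : (∫ θ in T..(π/2), g θ) ≤ ∫ θ in T..(π/2), ((c*B)^(lam+1))⁻¹ * θ^(-3:ℝ) :=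
        intervalIntegral.integral_mono_on hTle hint2 hint3 hptT
      rw [intervalIntegral.integral_const_mul,
        integral_rpow (Or.inr ⟨by norm_num, h0notin⟩)] at h5
      have hm2 : (-3:ℝ) + 1 = -2 := by norm_num
      rw [hm2] at h5
      refine h5.trans ?_
      apply mul_le_mul_of_nonneg_left ?_ (by positivity)
      have h6 : 0 ≤ (π/2)^(-2:ℝ) := Real.rpow_nonneg (by positivity) _
      have h7 : 0 ≤ T^(-2:ℝ) := Real.rpow_nonneg hT0.le _
      linarith [h6, h7]
    -- evaluate the T powers
    have hT2l : T^(2*lam) = A^lam / (c*B)^lam := by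
      rw [Real.rpow_mul hT0.le, Real.rpow_two, hT2,
        Real.div_rpow hA.le (by positivity)]
    have hTm2 : T^(-2:ℝ) = c*B/A := by
      rw [Real.rpow_neg hT0.le, Real.rpow_two, hT2, inv_div]
    set u : ℝ := (c*B)^lam with hu_def
    have hupos : 0 < u := Real.rpow_pos_of_pos (by positivity) _
    have hcB1 : (c*B)^(lam+1) = u * (c*B) := by
      rw [hu_def, Real.rpow_add (by positivity), Real.rpow_one]
    have htotal : (∫ θ in (0:ℝ)..(π/2), g θ) ≤ (1/(2*lam) + 1/2) * (u*A)⁻¹ := by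
      rw [hsplit]
      have key : (A^(lam+1))⁻¹ * (T^(2*lam)/(2*lam)) + ((c*B)^(lam+1))⁻¹ * (T^(-2:ℝ)/2)
          = (1/(2*lam) + 1/2) * (u*A)⁻¹ := by
        rw [hAl, hT2l, hTm2, hcB1]
        have hcBne : (c*B) ≠ 0 := by positivity
        field_simp
      rw [← key]
      exact add_le_add bound1 bound2
    -- final comparison
    have step2 : K * (∫ θ in (0:ℝ)..(π/2), g θ)
        ≤ K * ((1/(2*lam) + 1/2) * (u*A)⁻¹) :=
      mul_le_mul_of_nonneg_left htotal hKpos.le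
    refine (step1.trans step2).trans ?_
    rw [hmaxB]
    have hbpos : 0 < B^lam := Real.rpow_pos_of_pos hB _
    have hu_eq : u = c^lam * B^lam := Real.mul_rpow hcpos.le hB.le
    have hclam : c^(-lam) = (c^lam)⁻¹ := Real.rpow_neg hcpos.le _
    have hclampos : 0 < c^lam := Real.rpow_pos_of_pos hcpos _
    rw [hC₁, le_div_iff₀ (mul_pos hA hbpos)]
    have heq2 : K * ((1/(2*lam) + 1/2) * (u*A)⁻¹) * (A * B^lam)
        = K * (c^(-lam) * (1/(2*lam) + 1/2)) := by
      rw [hu_eq, hclam]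
      field_simp
    rw [heq2]
    have h8 : 0 < K * ((π/2)^(2*lam) * 2^lam / (2*lam)) := by
      apply mul_pos hKpos (div_pos (mul_pos hPpos htpos) (by linarith))
    rw [mul_add]
    linarith

end RegAux

/-- For `x₀ ≠ y` and `|x₀ - ξ| < |x₀ - y|/2`,
`∫₀^{π/2} (sinθ)^{2λ-1}/(ξ² + y² - 2ξy cosθ)^{λ+1} dθ ≤ C / (|x₀-y| m_λ(I(x₀,|x₀-y|)))`. -/
theorem integral_estimate_regularity (lam : ℝ) (hlam : 0 < lam) :
    ∃ C : ℝ, 0 < C ∧ ∀ x₀ y ξ : ℝ, 0 < x₀ → 0 < y → 0 < ξ → x₀ ≠ y →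
      |x₀ - ξ| < |x₀ - y| / 2 →
      (∫ θ in (0:ℝ)..(π/2),
          Real.sin θ ^ (2*lam - 1) / ((ξ^2 + y^2 - 2*ξ*y*Real.cos θ) ^ (lam + 1))) ≤
        C / (|x₀ - y| * (mlam lam (Ilam x₀ |x₀ - y|)).toReal) := by
  obtain ⟨C₁, hC₁pos, hcore⟩ := RegAux.core lam hlam
  have h38 : (0:ℝ) < (38:ℝ)^lam := Real.rpow_pos_of_pos (by norm_num) _
  refine ⟨8 * 38^lam * C₁, by positivity, ?_⟩
  intro x₀ y ξ hx₀ hy hξ hne hclose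
  set r : ℝ := |x₀ - y| with hr_def
  have hr : 0 < r := abs_pos.mpr (sub_ne_zero.mpr hne)
  set A : ℝ := (ξ - y)^2 with hA_def
  set B : ℝ := 2*ξ*y with hB_def
  have hB : 0 < B := by rw [hB_def]; positivity
  -- A > r²/4
  have hξy : r/2 < |ξ - y| := by
    have htri : |x₀ - y| ≤ |x₀ - ξ| + |ξ - y| := abs_sub_le x₀ ξ y
    rw [hr_def] at hclose ⊢
    linarith
  have hAr : r^2/4 < A := by
    have h1 : (r/2)^2 < |ξ - y|^2 := by
      apply pow_lt_pow_left₀ hξy (by positivity)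
      norm_num
    have h2 : |ξ - y|^2 = (ξ - y)^2 := sq_abs _
    rw [hA_def]
    nlinarith [h1, h2]
  have hA : 0 < A := lt_trans (by positivity) hAr
  -- rewrite the integrand
  have hIeq : (∫ θ in (0:ℝ)..(π/2),
      Real.sin θ ^ (2*lam - 1) / ((ξ^2 + y^2 - 2*ξ*y*Real.cos θ) ^ (lam + 1)))
      = ∫ θ in (0:ℝ)..(π/2), Real.sin θ ^ (2*lam - 1) / ((A + B*(1 - Real.cos θ)) ^ (lam + 1)) := by
    apply intervalIntegral.integral_congr
    intro θ _
    have h : ξ^2 + y^2 - 2*ξ*y*Real.cos θ = A + B*(1 - Real.cos θ) := by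
      rw [hA_def, hB_def]; ring
    simp only [h]
  rw [hIeq]
  refine (hcore A B hA hB).trans ?_
  -- geometric facts
  have hmaxpos : 0 < max A B := lt_of_lt_of_le hA (le_max_left _ _)
  have hMpos : 0 < (max A B)^lam := Real.rpow_pos_of_pos hmaxpos _
  have hx₀y : x₀ ≤ y + r := by
    have : x₀ - y ≤ |x₀ - y| := le_abs_self _
    rw [hr_def]; linarith
  have hmax : (x₀ + r)^2 ≤ 38 * max A B := by
    have hAm : A ≤ max A B := le_max_left _ _
    have hBm : B ≤ max A B := le_max_right _ _
    nlinarith [sq_nonneg (ξ + y - 2*r), hAr, hξ.le, hy.le, hr.le]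
  have hP1 : (x₀ + r)^(2*lam) ≤ 38^lam * (max A B)^lam := by
    have h1 : (x₀ + r)^(2*lam) = ((x₀+r)^2)^lam := by
      rw [Real.rpow_mul (by positivity), Real.rpow_two]
    rw [h1, ← Real.mul_rpow (by norm_num) hmaxpos.le]
    exact Real.rpow_le_rpow (sq_nonneg _) hmax hlam.le
  -- measure bounds
  have hm_le := RegAux.mlam_le lam x₀ r hlam hr hx₀
  have hm_pos := RegAux.mlam_pos lam x₀ r hlam hr hx₀
  have hm_fin : mlam lam (Ilam x₀ r) ≠ ⊤ :=
    ne_top_of_le_ne_top ENNReal.ofReal_ne_top hm_le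
  have hm_toReal_pos : 0 < (mlam lam (Ilam x₀ r)).toReal :=
    ENNReal.toReal_pos hm_pos.ne' hm_fin
  have hm_toReal_le : (mlam lam (Ilam x₀ r)).toReal ≤ 2*r*(x₀+r)^(2*lam) :=
    ENNReal.toReal_le_of_le_ofReal (by positivity) hm_le
  -- final comparison
  have hY : r * (mlam lam (Ilam x₀ r)).toReal ≤ 8 * 38^lam * (A * (max A B)^lam) := by
    have hPnn : (0:ℝ) ≤ (x₀+r)^(2*lam) := Real.rpow_nonneg (by positivity) _
    have h5 : r * (mlam lam (Ilam x₀ r)).toReal ≤ 2*r^2*(x₀+r)^(2*lam) := by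
      nlinarith [hm_toReal_le, hr]
    have h6 : 2*r^2*(x₀+r)^(2*lam) ≤ 8*A*(x₀+r)^(2*lam) := by
      nlinarith [hAr, hPnn]
    have h7 : 8*A*(x₀+r)^(2*lam) ≤ 8*A*(38^lam * (max A B)^lam) := by
      apply mul_le_mul_of_nonneg_left hP1 (by positivity)
    calc r * (mlam lam (Ilam x₀ r)).toReal ≤ 2*r^2*(x₀+r)^(2*lam) := h5
      _ ≤ 8*A*(x₀+r)^(2*lam) := h6
      _ ≤ 8*A*(38^lam * (max A B)^lam) := h7
      _ = 8 * 38^lam * (A * (max A B)^lam) := by ring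
  have hYpos : 0 < r * (mlam lam (Ilam x₀ r)).toReal := mul_pos hr hm_toReal_pos
  have hfin : (8 * 38^lam * C₁) / (8 * 38^lam * (A * (max A B)^lam))
      ≤ (8 * 38^lam * C₁) / (r * (mlam lam (Ilam x₀ r)).toReal) :=
    div_le_div_of_nonneg_left (by positivity) hYpos hY
  have heq : (8 * 38^lam * C₁) / (8 * 38^lam * (A * (max A B)^lam))
      = C₁ / (A * (max A B)^lam) := by
    rw [mul_div_mul_left _ _ (by positivity : (8:ℝ) * 38^lam ≠ 0)]
  rw [heq] at hfin
  exact hfin
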